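/- For (e,f) ∈ Δ = {(e,f) : 0 < f < e < 1}, the billiard rotation number satisfies ρ̂(e,f) = 1/3 if and only if e² + 2ef³ − 2ef − f⁴ = 0. -/

import Mathlib

open Real

/-- Incomplete elliptic integral of the first kind `F(φ,e)`. -/
noncomputable def ellF (φ e : ℝ) : ℝ :=
  ∫ τ in (0:ℝ)..φ, 1 / Real.sqrt (1 - e ^ 2 * Real.sin τ ^ 2)

/-- Complete elliptic integral of the first kind `K(e)`. -/
noncomputable def ellK (e : ℝ) : ℝ := ellF (Real.pi / 2) e

/-- The angle `ω̂(e,f)`. -/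
noncomputable def omegaHat (e f : ℝ) : ℝ :=
  Real.arcsin (Real.sqrt ((e ^ 2 - f ^ 2) / (e ^ 2 * (1 - f ^ 2))))

/-- The billiard rotation number `ρ̂(e,f)`. -/
noncomputable def rhoHat (e f : ℝ) : ℝ := ellF (omegaHat e f) e / (2 * ellK e)

/-!
In the variable `s = sin² φ` the integral `H(s) = F(arcsin √s, e)` has rational complement and
duplication maps: `H(κ s) = K - H(s)` for `κ s = (1 - s) / (1 - e² s)`, and `H(δ s) = 2 H(s)` for
`δ s = 4 s (1 - s) (1 - e² s) / (1 - e² s²)²` as long as the doubled amplitude stays below `π/2`.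
Both follow by differentiation: `κ` pulls `ds / √(s (1 - s) (1 - e² s))` back to its negative and
`δ` to twice itself. For `a = f² / e²` one computes `κ a = sin² ω̂`, so `ρ̂ = 1/3` means
`H(κ a) = 2 H(a)`, i.e. `κ a = δ a`. The case where doubling `a` overshoots `π/2` is excluded
because then doubling `κ a` does not, and `δ ∘ κ = δ`. Finally `κ a = δ a` factors as
`(e² - f²) (e² - f⁴ + 2ef (1 - f²)) (e² + 2ef³ - 2ef - f⁴) = 0`.
-/

open Set

theorem eq_of_hasDerivAt_eq_zero {f : ℝ → ℝ} {a b : ℝ} (hab : a ≤ b)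
    (hf : ContinuousOn f (Icc a b)) (hf' : ∀ x ∈ Ioo a b, HasDerivAt f 0 x) : f a = f b := by
  rcases hab.eq_or_lt with rfl | hab
  · rfl
  obtain ⟨c, -, hc⟩ := exists_hasDerivAt_eq_slope f (fun _ => 0) hab hf hf'
  rw [eq_comm, div_eq_zero_iff, sub_eq_zero] at hc
  exact (hc.resolve_right (sub_ne_zero.2 hab.ne')).symm

section EllipticIntegral

variable {e : ℝ}

theorem one_sub_sq_mul_pos (he : e ^ 2 < 1) {s : ℝ} (hs : s ≤ 1) : 0 < 1 - e ^ 2 * s := by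
  nlinarith

theorem continuous_ellF_integrand (he : e ^ 2 < 1) :
    Continuous fun τ => 1 / √(1 - e ^ 2 * sin τ ^ 2) :=
  continuous_const.div (by fun_prop) fun τ =>
    (sqrt_pos.2 (one_sub_sq_mul_pos he (sin_sq_le_one τ))).ne'

theorem hasDerivAt_ellF (he : e ^ 2 < 1) (φ : ℝ) :
    HasDerivAt (fun φ => ellF φ e) (1 / √(1 - e ^ 2 * sin φ ^ 2)) φ :=
  have h := continuous_ellF_integrand he
  intervalIntegral.integral_hasDerivAt_right (h.intervalIntegrable _ _)
    (h.stronglyMeasurableAtFilter _ _) h.continuousAt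

theorem ellF_strictMono (he : e ^ 2 < 1) : StrictMono fun φ => ellF φ e :=
  strictMono_of_hasDerivAt_pos (hasDerivAt_ellF he) fun φ =>
    one_div_pos.2 (sqrt_pos.2 (one_sub_sq_mul_pos he (sin_sq_le_one φ)))

theorem ellF_zero (e : ℝ) : ellF 0 e = 0 := intervalIntegral.integral_same

end EllipticIntegral

section SinSq

variable {e : ℝ}

/-- `F(φ, e)` in the variable `s = sin² φ`, `φ ∈ [0, π/2]`. -/
noncomputable def ellFSinSq (e s : ℝ) : ℝ := ellF (arcsin √s) e

def ellCubic (e s : ℝ) : ℝ := s * (1 - s) * (1 - e ^ 2 * s)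

theorem ellCubic_pos (he : e ^ 2 < 1) {s : ℝ} (hs : s ∈ Ioo 0 1) : 0 < ellCubic e s := by
  have := one_sub_sq_mul_pos he hs.2.le
  have := sub_pos.2 hs.2
  have := hs.1
  unfold ellCubic
  positivity

theorem ellFSinSq_zero (e : ℝ) : ellFSinSq e 0 = 0 := by
  simp [ellFSinSq, ellF_zero]

theorem ellFSinSq_one (e : ℝ) : ellFSinSq e 1 = ellK e := by
  simp [ellFSinSq, ellK]

theorem continuous_ellFSinSq (he : e ^ 2 < 1) : Continuous (ellFSinSq e) :=
  have hF : Continuous fun φ => ellF φ e :=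
    continuous_iff_continuousAt.2 fun φ => (hasDerivAt_ellF he φ).continuousAt
  hF.comp (continuous_arcsin.comp continuous_sqrt)

theorem ellFSinSq_strictMonoOn (he : e ^ 2 < 1) : StrictMonoOn (ellFSinSq e) (Icc 0 1) := by
  intro s hs t ht hst
  refine ellF_strictMono he (strictMonoOn_arcsin ?_ ?_ (sqrt_lt_sqrt hs.1 hst))
  · exact ⟨by linarith [sqrt_nonneg s], sqrt_le_one.2 hs.2⟩
  · exact ⟨by linarith [sqrt_nonneg t], sqrt_le_one.2 ht.2⟩

theorem ellFSinSq_pos (he : e ^ 2 < 1) {s : ℝ} (hs : s ∈ Ioc 0 1) : 0 < ellFSinSq e s :=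
  ellFSinSq_zero e ▸ ellFSinSq_strictMonoOn he ⟨le_rfl, zero_le_one⟩ (Ioc_subset_Icc_self hs) hs.1

theorem hasDerivAt_ellFSinSq (he : e ^ 2 < 1) {s : ℝ} (hs : s ∈ Ioo 0 1) :
    HasDerivAt (ellFSinSq e) (1 / (2 * √(ellCubic e s))) s := by
  obtain ⟨hs0, hs1⟩ := hs
  have hsq : √s < 1 := (sqrt_lt' one_pos).2 (by linarith)
  have h := (hasDerivAt_ellF he (arcsin √s)).comp s
    ((hasDerivAt_arcsin (by linarith [sqrt_nonneg s]) hsq.ne).comp s (hasDerivAt_sqrt hs0.ne'))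
  refine h.congr_deriv ?_
  rw [sin_arcsin (by linarith [sqrt_nonneg s]) hsq.le, sq_sqrt hs0.le, ellCubic,
    sqrt_mul (by positivity), sqrt_mul (by positivity)]
  field_simp

theorem hasDerivAt_ellFSinSq_comp (he : e ^ 2 < 1) {r : ℝ → ℝ} {r' k s : ℝ}
    (hr : HasDerivAt r r' s) (hs : s ∈ Ioo 0 1) (hrs : r s ∈ Ioo 0 1)
    (hsq : r' ^ 2 * ellCubic e s = k ^ 2 * ellCubic e (r s)) (hsign : 0 ≤ r' * k) :
    HasDerivAt (fun x => ellFSinSq e (r x)) (k / (2 * √(ellCubic e s))) s := by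
  have ha := sqrt_pos.2 (ellCubic_pos he hs)
  have hb := sqrt_pos.2 (ellCubic_pos he hrs)
  have hab : r' * √(ellCubic e s) = k * √(ellCubic e (r s)) := by
    have h2 : (r' * √(ellCubic e s)) ^ 2 = (k * √(ellCubic e (r s))) ^ 2 := by
      rw [mul_pow, mul_pow, sq_sqrt (ellCubic_pos he hs).le, sq_sqrt (ellCubic_pos he hrs).le, hsq]
    rcases sq_eq_sq_iff_eq_or_eq_neg.1 h2 with h | h
    · exact h
    · nlinarith [mul_pos ha hb, mul_nonneg hsign (mul_pos ha hb).le]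
  refine ((hasDerivAt_ellFSinSq he hrs).comp s hr).congr_deriv ?_
  field_simp
  linarith

theorem ellFSinSq_comp_sub_eq (he : e ^ 2 < 1) {r : ℝ → ℝ} {k a b : ℝ} (ha : 0 ≤ a)
    (hab : a ≤ b) (hb : b ≤ 1) (hr : ContinuousOn r (Icc a b))
    (hr' : ∀ x ∈ Ioo a b, HasDerivAt (fun y => ellFSinSq e (r y)) (k / (2 * √(ellCubic e x))) x) :
    ellFSinSq e (r a) - k * ellFSinSq e a = ellFSinSq e (r b) - k * ellFSinSq e b := by
  refine eq_of_hasDerivAt_eq_zero hab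
    (((continuous_ellFSinSq he).comp_continuousOn hr).sub
      (continuous_const.mul (continuous_ellFSinSq he)).continuousOn) fun x hx => ?_
  have hx01 : x ∈ Ioo 0 1 := ⟨ha.trans_lt hx.1, hx.2.trans_le hb⟩
  refine ((hr' x hx).sub ((hasDerivAt_ellFSinSq he hx01).const_mul k)).congr_deriv ?_
  ring

/-- `sn² (K - u) = cn² u / dn² u` for `s = sn² u`. -/
noncomputable def complSinSq (e s : ℝ) : ℝ := (1 - s) / (1 - e ^ 2 * s)

theorem complSinSq_mem_Ioo (he : e ^ 2 < 1) {s : ℝ} (hs : s ∈ Ioo 0 1) :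
    complSinSq e s ∈ Ioo 0 1 := by
  obtain ⟨hs0, hs1⟩ := hs
  have hd := one_sub_sq_mul_pos he hs1.le
  refine ⟨div_pos (by linarith) hd, (div_lt_one hd).2 ?_⟩
  nlinarith [sq_nonneg e]

theorem hasDerivAt_complSinSq (he : e ^ 2 < 1) {s : ℝ} (hs : s ≤ 1) :
    HasDerivAt (complSinSq e) (-(1 - e ^ 2) / (1 - e ^ 2 * s) ^ 2) s := by
  have hd := one_sub_sq_mul_pos he hs
  refine (((hasDerivAt_id' s).const_sub 1).div (((hasDerivAt_id' s).const_mul (e ^ 2)).const_sub 1)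
    hd.ne').congr_deriv ?_
  field_simp
  ring

theorem ellFSinSq_complSinSq_add (he : e ^ 2 < 1) {s : ℝ} (hs : s ∈ Icc 0 1) :
    ellFSinSq e (complSinSq e s) + ellFSinSq e s = ellK e := by
  have hcont : ContinuousOn (complSinSq e) (Icc s 1) := fun x hx =>
    (hasDerivAt_complSinSq he hx.2).continuousAt.continuousWithinAt
  have h := ellFSinSq_comp_sub_eq he (k := -1) hs.1 hs.2 le_rfl hcont fun x hx => by
    have hx01 : x ∈ Ioo 0 1 := ⟨hs.1.trans_lt hx.1, hx.2⟩
    have hd := one_sub_sq_mul_pos he hx.2.le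
    refine hasDerivAt_ellFSinSq_comp he (hasDerivAt_complSinSq he hx.2.le) hx01
      (complSinSq_mem_Ioo he hx01) ?_ ?_
    · unfold ellCubic complSinSq
      field_simp
      ring
    · have : 0 ≤ 1 - e ^ 2 := by linarith
      rw [neg_div, neg_mul_neg, mul_one]
      positivity
  simpa [complSinSq, ellFSinSq_zero, ellFSinSq_one] using h

/-- `sn² (2u) = 4 sn² u cn² u dn² u / (1 - e² sn⁴ u)²` for `s = sn² u`. -/
noncomputable def doubleSinSq (e s : ℝ) : ℝ := 4 * ellCubic e s / (1 - e ^ 2 * s ^ 2) ^ 2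

/-- The numerator of `cn (2u) = (1 - 2 sn² u + e² sn⁴ u) / (1 - e² sn⁴ u)`: its sign tells whether
the doubled amplitude stays in `[0, π/2]`. -/
def cnDoubleNum (e s : ℝ) : ℝ := 1 - 2 * s + e ^ 2 * s ^ 2

theorem one_sub_doubleSinSq (he : e ^ 2 < 1) {s : ℝ} (hs : s ∈ Icc 0 1) :
    1 - doubleSinSq e s = cnDoubleNum e s ^ 2 / (1 - e ^ 2 * s ^ 2) ^ 2 := by
  -- `field_simp` only finds side conditions stated in its own normal form
  have hD : 1 - s ^ 2 * e ^ 2 ≠ 0 := by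
    rw [mul_comm]; exact (one_sub_sq_mul_pos he (pow_le_one₀ hs.1 hs.2)).ne'
  unfold doubleSinSq ellCubic cnDoubleNum
  field_simp
  ring

theorem doubleSinSq_mem_Icc (he : e ^ 2 < 1) {s : ℝ} (hs : s ∈ Icc 0 1) :
    doubleSinSq e s ∈ Icc 0 1 := by
  have : 0 ≤ ellCubic e s :=
    mul_nonneg (mul_nonneg hs.1 (sub_nonneg.2 hs.2)) (one_sub_sq_mul_pos he hs.2).le
  refine ⟨by unfold doubleSinSq; positivity, ?_⟩
  have : 0 ≤ 1 - doubleSinSq e s := one_sub_doubleSinSq he hs ▸ by positivity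
  linarith

theorem doubleSinSq_mem_Ioo (he : e ^ 2 < 1) {s : ℝ} (hs : s ∈ Ioo 0 1)
    (hP : 0 < cnDoubleNum e s) : doubleSinSq e s ∈ Ioo 0 1 := by
  have hs' : s ∈ Icc 0 1 := Ioo_subset_Icc_self hs
  have hD := one_sub_sq_mul_pos he (pow_le_one₀ hs'.1 hs'.2 : s ^ 2 ≤ 1)
  refine ⟨by have := ellCubic_pos he hs; unfold doubleSinSq; positivity, ?_⟩
  have : 0 < 1 - doubleSinSq e s := one_sub_doubleSinSq he hs' ▸ by positivity
  linarith

theorem hasDerivAt_doubleSinSq (he : e ^ 2 < 1) {s : ℝ} (hs : s ∈ Icc 0 1) :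
    HasDerivAt (doubleSinSq e)
      (4 * cnDoubleNum e s * (1 - 2 * e ^ 2 * s + e ^ 2 * s ^ 2) / (1 - e ^ 2 * s ^ 2) ^ 3) s := by
  have hD := (one_sub_sq_mul_pos he (pow_le_one₀ hs.1 hs.2 : s ^ 2 ≤ 1)).ne'
  have hC : HasDerivAt (ellCubic e) (1 - 2 * (1 + e ^ 2) * s + 3 * e ^ 2 * s ^ 2) s := by
    have : ellCubic e = fun x => x - (1 + e ^ 2) * x ^ 2 + e ^ 2 * x ^ 3 := by
      funext x; unfold ellCubic; ring
    rw [this]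
    refine ((((hasDerivAt_id' s).sub ((hasDerivAt_pow 2 s).const_mul _)).add
      ((hasDerivAt_pow 3 s).const_mul _))).congr_deriv ?_
    ring
  have hD' : 1 - s ^ 2 * e ^ 2 ≠ 0 := by rw [mul_comm]; exact hD
  refine ((hC.const_mul 4).div ((((hasDerivAt_pow 2 s).const_mul (e ^ 2)).const_sub 1).fun_pow 2)
    (pow_ne_zero 2 hD)).congr_deriv ?_
  unfold ellCubic cnDoubleNum
  field_simp
  ring

theorem ellFSinSq_doubleSinSq (he : e ^ 2 < 1) {s : ℝ} (hs : s ∈ Icc 0 1)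
    (hP : 0 ≤ cnDoubleNum e s) : ellFSinSq e (doubleSinSq e s) = 2 * ellFSinSq e s := by
  have hcont : ContinuousOn (doubleSinSq e) (Icc 0 s) := fun x hx =>
    (hasDerivAt_doubleSinSq he ⟨hx.1, hx.2.trans hs.2⟩).continuousAt.continuousWithinAt
  have h := ellFSinSq_comp_sub_eq he (k := 2) le_rfl hs.1 hs.2 hcont fun x hx => by
    have hx01 : x ∈ Ioo 0 1 := ⟨hx.1, hx.2.trans_le hs.2⟩
    have hPx : 0 < cnDoubleNum e x := by
      have := mul_le_of_le_one_left (show 0 ≤ s + x by linarith [hx.1, hx.2]) he.le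
      unfold cnDoubleNum at hP ⊢
      nlinarith [mul_pos (sub_pos.2 hx.2) (show 0 < 2 - e ^ 2 * (s + x) by linarith [hx01.2, hs.2])]
    have hQx : 0 < 1 - 2 * e ^ 2 * x + e ^ 2 * x ^ 2 := by nlinarith [sq_nonneg (e * (1 - x))]
    have hD := one_sub_sq_mul_pos he (pow_le_one₀ hx01.1.le hx01.2.le : x ^ 2 ≤ 1)
    have hD' : 1 - x ^ 2 * e ^ 2 ≠ 0 := by rw [mul_comm]; exact hD.ne'
    refine hasDerivAt_ellFSinSq_comp he (hasDerivAt_doubleSinSq he (Ioo_subset_Icc_self hx01))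
      hx01 (doubleSinSq_mem_Ioo he hx01 hPx) ?_ (by positivity)
    unfold doubleSinSq ellCubic cnDoubleNum
    field_simp
    ring
  simpa [doubleSinSq, ellCubic, ellFSinSq_zero, sub_eq_zero] using h.symm

theorem doubleSinSq_complSinSq (he : e ^ 2 < 1) {s : ℝ} (hs : s ≤ 1) :
    doubleSinSq e (complSinSq e s) = doubleSinSq e s := by
  have h0 := (one_sub_sq_mul_pos he hs).ne'
  have h1 : 1 - s * e ^ 2 ≠ 0 := by rw [mul_comm]; exact h0
  have h3 : 1 - e ^ 2 ≠ 0 := by linarith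
  have hκ : 1 - e ^ 2 * complSinSq e s ^ 2 =
      (1 - e ^ 2) * (1 - e ^ 2 * s ^ 2) / (1 - e ^ 2 * s) ^ 2 := by
    rw [complSinSq, div_pow, mul_div_assoc', one_sub_div (pow_ne_zero 2 h0)]
    ring
  rw [doubleSinSq, hκ]
  unfold doubleSinSq ellCubic complSinSq
  field_simp
  ring

theorem cnDoubleNum_complSinSq (he : e ^ 2 < 1) {s : ℝ} (hs : s ≤ 1) :
    cnDoubleNum e (complSinSq e s) = -(1 - e ^ 2) * cnDoubleNum e s / (1 - e ^ 2 * s) ^ 2 := by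
  have h1 : 1 - s * e ^ 2 ≠ 0 := by rw [mul_comm]; exact (one_sub_sq_mul_pos he hs).ne'
  unfold cnDoubleNum complSinSq
  field_simp
  ring

theorem three_mul_ellFSinSq_complSinSq_eq_iff (he : e ^ 2 < 1) {a : ℝ} (ha : a ∈ Ioo 0 1) :
    3 * ellFSinSq e (complSinSq e a) = 2 * ellK e ↔ complSinSq e a = doubleSinSq e a := by
  have ha' := Ioo_subset_Icc_self ha
  have hm := complSinSq_mem_Ioo he ha
  have hm' := Ioo_subset_Icc_self hm
  have hsum := ellFSinSq_complSinSq_add he ha'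
  have hHa := ellFSinSq_pos he (Ioo_subset_Ioc_self ha)
  have hHm := ellFSinSq_pos he (Ioo_subset_Ioc_self hm)
  rcases le_or_gt 0 (cnDoubleNum e a) with hP | hP
  · have hd := ellFSinSq_doubleSinSq he ha' hP
    refine ⟨fun h => (ellFSinSq_strictMonoOn he).injOn hm' (doubleSinSq_mem_Icc he ha') ?_,
      fun h => ?_⟩
    · linarith
    · rw [h] at hsum ⊢
      linarith
  · have hPm : 0 ≤ cnDoubleNum e (complSinSq e a) := by
      rw [cnDoubleNum_complSinSq he ha.2.le]
      have : 0 ≤ 1 - e ^ 2 := by linarith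
      exact div_nonneg (by nlinarith) (sq_nonneg _)
    have hd := ellFSinSq_doubleSinSq he hm' hPm
    rw [doubleSinSq_complSinSq he ha.2.le] at hd
    have hle : ellFSinSq e (doubleSinSq e a) ≤ ellK e :=
      ellFSinSq_one e ▸ (ellFSinSq_strictMonoOn he).monotoneOn (doubleSinSq_mem_Icc he ha')
        ⟨zero_le_one, le_rfl⟩ (doubleSinSq_mem_Icc he ha').2
    refine ⟨fun h => by linarith, fun h => ?_⟩
    rw [← h] at hd
    linarith

end SinSq

theorem complSinSq_sq_div_sq {e f : ℝ} (he : e ≠ 0) :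
    complSinSq e (f ^ 2 / e ^ 2) = (e ^ 2 - f ^ 2) / (e ^ 2 * (1 - f ^ 2)) := by
  unfold complSinSq
  field_simp

theorem complSinSq_eq_doubleSinSq_iff {e f : ℝ} (hf : 0 < f) (hfe : f < e) (he : e < 1) :
    complSinSq e (f ^ 2 / e ^ 2) = doubleSinSq e (f ^ 2 / e ^ 2) ↔
      e ^ 2 + 2 * e * f ^ 3 - 2 * e * f - f ^ 4 = 0 := by
  have he0 : 0 < e := hf.trans hfe
  have hf1 : 0 < 1 - f ^ 2 := by nlinarith
  have hef : 0 < e ^ 2 - f ^ 2 := by nlinarith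
  have hef4 : 0 < e ^ 2 - f ^ 4 := by nlinarith
  have hδ : doubleSinSq e (f ^ 2 / e ^ 2) =
      4 * f ^ 2 * (e ^ 2 - f ^ 2) * (1 - f ^ 2) / (e ^ 2 - f ^ 4) ^ 2 := by
    unfold doubleSinSq ellCubic
    field_simp
  rw [complSinSq_sq_div_sq he0.ne', hδ,
    div_eq_div_iff (by positivity) (pow_ne_zero 2 hef4.ne')]
  have hpos : 0 < (e ^ 2 - f ^ 2) * (e ^ 2 - f ^ 4 + 2 * e * f * (1 - f ^ 2)) :=
    mul_pos hef (by positivity)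
  constructor
  · intro h
    have := mul_eq_zero.1 (show (e ^ 2 - f ^ 2) * (e ^ 2 - f ^ 4 + 2 * e * f * (1 - f ^ 2)) *
      (e ^ 2 + 2 * e * f ^ 3 - 2 * e * f - f ^ 4) = 0 by linear_combination h)
    exact this.resolve_left hpos.ne'
  · intro h
    linear_combination (e ^ 2 - f ^ 2) * (e ^ 2 - f ^ 4 + 2 * e * f * (1 - f ^ 2)) * h

/-- on `Δ`, `ρ̂(e,f) = 1/3` iff `e² + 2ef³ − 2ef − f⁴ = 0`. -/
theorem period_three_porism (e f : ℝ) (hf : 0 < f) (hfe : f < e) (he : e < 1) :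
    rhoHat e f = 1 / 3 ↔ e ^ 2 + 2 * e * f ^ 3 - 2 * e * f - f ^ 4 = 0 := by
  have he0 : 0 < e := hf.trans hfe
  have he2 : e ^ 2 < 1 := by nlinarith
  have ha : f ^ 2 / e ^ 2 ∈ Ioo 0 1 :=
    ⟨by positivity, (div_lt_one (by positivity)).2 (by nlinarith)⟩
  have hK : 0 < ellK e := ellFSinSq_one e ▸ ellFSinSq_pos he2 ⟨zero_lt_one, le_rfl⟩
  have hρ : rhoHat e f = ellFSinSq e (complSinSq e (f ^ 2 / e ^ 2)) / (2 * ellK e) := by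
    rw [complSinSq_sq_div_sq he0.ne']
    rfl
  rw [hρ, div_eq_iff (by positivity), ← complSinSq_eq_doubleSinSq_iff hf hfe he,
    ← three_mul_ellFSinSq_complSinSq_eq_iff he2 ha]
  constructor <;> intro h <;> linarith
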